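/- arXiv:2103.04679 — 4 statements merged into one kernel-verified Lean document; each statement's English description precedes it below -/
import Mathlib

section
/- Let c > 0 and r₁, r₂ > 0 with r₁² + r₂² = 1. Define f(u₁) = cosh(r₂√c u₁), g(u₂) = (r₂/r₁)sinh(r₁√c u₂), Ω(u₁,u₂) = r₁r₂(f(u₁) + g(u₂)), and W(u₁,u₂) = r₂²f(u₁) − r₁²g(u₂). Then for all (u₁,u₂) ∈ ℝ²: (f'(u₁))² + (g'(u₂))² = c(Ω(u₁,u₂)² + W(u₁,u₂)²). -/
open Real

theorem stmt_4 (r1 r2 c : ℝ) (hr1 : 0 < r1) (hr2 : 0 < r2) (hc : 0 < c)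
    (h : r1 ^ 2 + r2 ^ 2 = 1)
    (f g : ℝ → ℝ) (Ω W : ℝ → ℝ → ℝ)
    (hf : ∀ u1, f u1 = Real.cosh (r2 * Real.sqrt c * u1))
    (hg : ∀ u2, g u2 = (r2 / r1) * Real.sinh (r1 * Real.sqrt c * u2))
    (hΩ : ∀ u1 u2, Ω u1 u2 = r1 * r2 * (f u1 + g u2))
    (hW : ∀ u1 u2, W u1 u2 = r2 ^ 2 * f u1 - r1 ^ 2 * g u2) :
    ∀ u1 u2 : ℝ,
      (deriv f u1) ^ 2 + (deriv g u2) ^ 2 = c * ((Ω u1 u2) ^ 2 + (W u1 u2) ^ 2) := by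
  intro u1 u2
  have hfe : f = fun u => Real.cosh (r2 * Real.sqrt c * u) := funext hf
  have hge : g = fun u => (r2 / r1) * Real.sinh (r1 * Real.sqrt c * u) := funext hg
  have hfd : deriv f u1 = r2 * Real.sqrt c * Real.sinh (r2 * Real.sqrt c * u1) := by
    rw [hfe]
    have h1 : HasDerivAt (fun u : ℝ => Real.cosh (r2 * Real.sqrt c * u))
        (Real.sinh (r2 * Real.sqrt c * u1) * (r2 * Real.sqrt c)) u1 :=
      by simpa using ((hasDerivAt_id u1).const_mul (r2 * Real.sqrt c)).cosh
    rw [h1.deriv]; ring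
  have hgd : deriv g u2 = r2 * Real.sqrt c * Real.cosh (r1 * Real.sqrt c * u2) := by
    rw [hge]
    have h1 : HasDerivAt (fun u : ℝ => (r2 / r1) * Real.sinh (r1 * Real.sqrt c * u))
        ((Real.cosh (r1 * Real.sqrt c * u2) * (r1 * Real.sqrt c)) * (r2 / r1)) u2 := by
      have := (((hasDerivAt_id u2).const_mul (r1 * Real.sqrt c)).sinh).const_mul (r2 / r1)
      simpa [mul_comm] using this
    rw [h1.deriv]
    field_simp
  have hA := Real.cosh_sq_sub_sinh_sq (r2 * Real.sqrt c * u1)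
  have hB := Real.cosh_sq_sub_sinh_sq (r1 * Real.sqrt c * u2)
  have hs : Real.sqrt c ^ 2 = c := Real.sq_sqrt hc.le
  rw [hfd, hgd, hΩ, hW, hf, hg]
  have hr1' : r1 ≠ 0 := hr1.ne'
  have hinv : r1 ^ 2 * r1⁻¹ ^ 2 = 1 := by
    field_simp
  linear_combination (r2^2*(Real.sinh (r2*Real.sqrt c*u1)^2 + Real.cosh (r1*Real.sqrt c*u2)^2)) * hs
    - (c*r2^2*(Real.cosh (r2*Real.sqrt c*u1)^2 + Real.sinh (r1*Real.sqrt c*u2)^2)) * h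
    - (c*r2^2) * hA + (c*r2^2) * hB
    - (c*r2^2*Real.sinh (r1*Real.sqrt c*u2)^2*(r1^2+r2^2)) * hinv
end

section
/- Let r₁, r₂, c > 0 with r₁² + r₂² = 1. Suppose f(u₁) = a₁cosh(r₂√c u₁) + a₂sinh(r₂√c u₁) and g(u₂) = b₁cosh(r₁√c u₂) + b₂sinh(r₁√c u₂), and set Ω = r₁r₂(f+g), W = r₂²f − r₁²g. If the identity (f'(u₁))² + (g'(u₂))² = c(Ω² + W²) holds for all (u₁,u₂) ∈ ℝ², then (a₁² − a₂²)r₂² = (b₂² − b₁²)r₁². -/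
open Real

/-!
It suffices to evaluate the identity at the origin, where `f = a₁`, `g = b₁`,
`f' = a₂ r₂ √c` and `g' = b₂ r₁ √c`. Since `r₁² + r₂² = 1`, the right-hand side collapses to
`c (r₂² a₁² + r₁² b₁²)` by a Lagrange-type identity. Cancelling `c` gives `r₂² a₂² + r₁² b₂² = r₂² a₁² + r₁² b₁²`.
-/

theorem hasDerivAt_cosh_add_sinh (p q k x : ℝ) :
    HasDerivAt (fun u => p * cosh (k * u) + q * sinh (k * u))
      (k * (p * sinh (k * x) + q * cosh (k * x))) x := by
  have hk : HasDerivAt (fun u : ℝ => k * u) k x := by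
    simpa using (hasDerivAt_id x).const_mul k
  exact ((hk.cosh.const_mul p).add (hk.sinh.const_mul q)).congr_deriv (by ring)

theorem deriv_cosh_add_sinh_zero (p q k : ℝ) :
    deriv (fun u => p * cosh (k * u) + q * sinh (k * u)) 0 = q * k := by
  rw [(hasDerivAt_cosh_add_sinh p q k 0).deriv]
  simp [mul_comm]

theorem sq_mul_add_add_sq_sub (r₁ r₂ x y : ℝ) :
    (r₁ * r₂ * (x + y)) ^ 2 + (r₂ ^ 2 * x - r₁ ^ 2 * y) ^ 2
      = (r₁ ^ 2 + r₂ ^ 2) * (r₂ ^ 2 * x ^ 2 + r₁ ^ 2 * y ^ 2) := by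
  ring

theorem stmt_7_general (r1 r2 c : ℝ) (hc : 0 < c)
    (h : r1 ^ 2 + r2 ^ 2 = 1)
    (a1 a2 b1 b2 : ℝ)
    (f g : ℝ → ℝ) (Ω W : ℝ → ℝ → ℝ)
    (hf : ∀ u1, f u1 = a1 * Real.cosh (r2 * Real.sqrt c * u1) +
        a2 * Real.sinh (r2 * Real.sqrt c * u1))
    (hg : ∀ u2, g u2 = b1 * Real.cosh (r1 * Real.sqrt c * u2) +
        b2 * Real.sinh (r1 * Real.sqrt c * u2))
    (hΩ : ∀ u1 u2, Ω u1 u2 = r1 * r2 * (f u1 + g u2))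
    (hW : ∀ u1 u2, W u1 u2 = r2 ^ 2 * f u1 - r1 ^ 2 * g u2)
    (hid : ∀ u1 u2 : ℝ,
      (deriv f u1) ^ 2 + (deriv g u2) ^ 2 = c * ((Ω u1 u2) ^ 2 + (W u1 u2) ^ 2)) :
    (a1 ^ 2 - a2 ^ 2) * r2 ^ 2 = (b2 ^ 2 - b1 ^ 2) * r1 ^ 2 := by
  have hf' : deriv f 0 = a2 * (r2 * √c) := by
    rw [funext hf, deriv_cosh_add_sinh_zero]
  have hg' : deriv g 0 = b2 * (r1 * √c) := by
    rw [funext hg, deriv_cosh_add_sinh_zero]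
  have hf0 : f 0 = a1 := by simp [hf]
  have hg0 : g 0 = b1 := by simp [hg]
  have hsqrt : √c ^ 2 = c := sq_sqrt hc.le
  have hid0 := hid 0 0
  rw [hf', hg', hΩ, hW, hf0, hg0, sq_mul_add_add_sq_sub, h] at hid0
  have hcancel :
      c * (r2 ^ 2 * a2 ^ 2 + r1 ^ 2 * b2 ^ 2) = c * (r2 ^ 2 * a1 ^ 2 + r1 ^ 2 * b1 ^ 2) := by
    linear_combination hid0 - (a2 ^ 2 * r2 ^ 2 + b2 ^ 2 * r1 ^ 2) * hsqrt
  linear_combination (mul_left_cancel₀ hc.ne' hcancel).symm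

theorem stmt_7 (r1 r2 c : ℝ) (hr1 : 0 < r1) (hr2 : 0 < r2) (hc : 0 < c)
    (h : r1 ^ 2 + r2 ^ 2 = 1)
    (a1 a2 b1 b2 : ℝ)
    (f g : ℝ → ℝ) (Ω W : ℝ → ℝ → ℝ)
    (hf : ∀ u1, f u1 = a1 * Real.cosh (r2 * Real.sqrt c * u1) +
        a2 * Real.sinh (r2 * Real.sqrt c * u1))
    (hg : ∀ u2, g u2 = b1 * Real.cosh (r1 * Real.sqrt c * u2) +
        b2 * Real.sinh (r1 * Real.sqrt c * u2))
    (hΩ : ∀ u1 u2, Ω u1 u2 = r1 * r2 * (f u1 + g u2))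
    (hW : ∀ u1 u2, W u1 u2 = r2 ^ 2 * f u1 - r1 ^ 2 * g u2)
    (hid : ∀ u1 u2 : ℝ,
      (deriv f u1) ^ 2 + (deriv g u2) ^ 2 = c * ((Ω u1 u2) ^ 2 + (W u1 u2) ^ 2)) :
    (a1 ^ 2 - a2 ^ 2) * r2 ^ 2 = (b2 ^ 2 - b1 ^ 2) * r1 ^ 2 :=
  stmt_7_general r1 r2 c hc h a1 a2 b1 b2 f g Ω W hf hg hΩ hW hid
end

section
/- Conversely, let r₁, r₂, c > 0 with r₁² + r₂² = 1 and a₁, a₂, b₁, b₂ ∈ ℝ with (a₁² − a₂²)r₂² = (b₂² − b₁²)r₁². Define f(u₁) = a₁cosh(r₂√c u₁) + a₂sinh(r₂√c u₁), g(u₂) = b₁cosh(r₁√c u₂) + b₂sinh(r₁√c u₂), Ω = r₁r₂(f+g), W = r₂²f − r₁²g. Then (f'(u₁))² + (g'(u₂))² = c(Ω² + W²) for all (u₁,u₂) ∈ ℝ². -/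
/-!
A combination `y = α cosh(kt) + β sinh(kt)` has the first integral `y'² = k²(y² - (α² - β²))`.
Adding those of `f` and `g`, the coefficient constraint cancels the two constants and leaves
`c(r₂²f² + r₁²g²)`; and since `r₁² + r₂² = 1`, the pair `(r₁r₂(x + y), r₂²x - r₁²y)` has squared
length `r₂²x² + r₁²y²`, so `Ω² + W² = r₂²f² + r₁²g²` as well.
-/

open Real

theorem hasDerivAt_mul_cosh_add_mul_sinh (a b k x : ℝ) :
    HasDerivAt (fun t => a * cosh (k * t) + b * sinh (k * t))
      (k * (a * sinh (k * x) + b * cosh (k * x))) x := by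
  have hk : HasDerivAt (fun t : ℝ => k * t) k x := by
    simpa using (hasDerivAt_id x).const_mul k
  exact ((hk.cosh.const_mul a).add (hk.sinh.const_mul b)).congr_deriv (by ring)

theorem sq_mul_sinh_add_mul_cosh (a b y : ℝ) :
    (a * sinh y + b * cosh y) ^ 2 = (a * cosh y + b * sinh y) ^ 2 - (a ^ 2 - b ^ 2) := by
  linear_combination (b ^ 2 - a ^ 2) * cosh_sq_sub_sinh_sq y

theorem deriv_mul_cosh_add_mul_sinh_sq (a b k x : ℝ) :
    deriv (fun t => a * cosh (k * t) + b * sinh (k * t)) x ^ 2 =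
      k ^ 2 * ((a * cosh (k * x) + b * sinh (k * x)) ^ 2 - (a ^ 2 - b ^ 2)) := by
  rw [(hasDerivAt_mul_cosh_add_mul_sinh a b k x).deriv, mul_pow, sq_mul_sinh_add_mul_cosh]

theorem sq_add_sq_of_sq_add_sq_eq_one {r₁ r₂ : ℝ} (h : r₁ ^ 2 + r₂ ^ 2 = 1) (x y : ℝ) :
    (r₁ * r₂ * (x + y)) ^ 2 + (r₂ ^ 2 * x - r₁ ^ 2 * y) ^ 2 = r₂ ^ 2 * x ^ 2 + r₁ ^ 2 * y ^ 2 := by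
  linear_combination (r₂ ^ 2 * x ^ 2 + r₁ ^ 2 * y ^ 2) * h

theorem stmt_8_general (r1 r2 c : ℝ) (hc : 0 < c)
    (h : r1 ^ 2 + r2 ^ 2 = 1)
    (a1 a2 b1 b2 : ℝ)
    (hab : (a1 ^ 2 - a2 ^ 2) * r2 ^ 2 = (b2 ^ 2 - b1 ^ 2) * r1 ^ 2)
    (f g : ℝ → ℝ) (Ω W : ℝ → ℝ → ℝ)
    (hf : ∀ u1, f u1 = a1 * Real.cosh (r2 * Real.sqrt c * u1) +
        a2 * Real.sinh (r2 * Real.sqrt c * u1))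
    (hg : ∀ u2, g u2 = b1 * Real.cosh (r1 * Real.sqrt c * u2) +
        b2 * Real.sinh (r1 * Real.sqrt c * u2))
    (hΩ : ∀ u1 u2, Ω u1 u2 = r1 * r2 * (f u1 + g u2))
    (hW : ∀ u1 u2, W u1 u2 = r2 ^ 2 * f u1 - r1 ^ 2 * g u2) :
    ∀ u1 u2 : ℝ,
      (deriv f u1) ^ 2 + (deriv g u2) ^ 2 = c * ((Ω u1 u2) ^ 2 + (W u1 u2) ^ 2) := by
  intro u1 u2
  have hdf : deriv f u1 ^ 2 = (r2 * √c) ^ 2 * (f u1 ^ 2 - (a1 ^ 2 - a2 ^ 2)) := by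
    rw [funext hf]
    exact deriv_mul_cosh_add_mul_sinh_sq a1 a2 _ u1
  have hdg : deriv g u2 ^ 2 = (r1 * √c) ^ 2 * (g u2 ^ 2 - (b1 ^ 2 - b2 ^ 2)) := by
    rw [funext hg]
    exact deriv_mul_cosh_add_mul_sinh_sq b1 b2 _ u2
  rw [hdf, hdg, hΩ, hW, sq_add_sq_of_sq_add_sq_eq_one h, mul_pow, mul_pow, sq_sqrt hc.le]
  linear_combination (-c) * hab

theorem stmt_8 (r1 r2 c : ℝ) (hr1 : 0 < r1) (hr2 : 0 < r2) (hc : 0 < c)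
    (h : r1 ^ 2 + r2 ^ 2 = 1)
    (a1 a2 b1 b2 : ℝ)
    (hab : (a1 ^ 2 - a2 ^ 2) * r2 ^ 2 = (b2 ^ 2 - b1 ^ 2) * r1 ^ 2)
    (f g : ℝ → ℝ) (Ω W : ℝ → ℝ → ℝ)
    (hf : ∀ u1, f u1 = a1 * Real.cosh (r2 * Real.sqrt c * u1) +
        a2 * Real.sinh (r2 * Real.sqrt c * u1))
    (hg : ∀ u2, g u2 = b1 * Real.cosh (r1 * Real.sqrt c * u2) +
        b2 * Real.sinh (r1 * Real.sqrt c * u2))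
    (hΩ : ∀ u1 u2, Ω u1 u2 = r1 * r2 * (f u1 + g u2))
    (hW : ∀ u1 u2, W u1 u2 = r2 ^ 2 * f u1 - r1 ^ 2 * g u2) :
    ∀ u1 u2 : ℝ,
      (deriv f u1) ^ 2 + (deriv g u2) ^ 2 = c * ((Ω u1 u2) ^ 2 + (W u1 u2) ^ 2) :=
  stmt_8_general r1 r2 c hc h a1 a2 b1 b2 hab f g Ω W hf hg hΩ hW
end

section
/- Let r₁, r₂, c > 0 with r₁² + r₂² = 1. With f(u₁) = cosh(r₂√c u₁), g(u₂) = (r₂/r₁)sinh(r₁√c u₂), Ω = r₁r₂(f+g), W = r₂²f − r₁²g, S = (1+c)(Ω²+W²), define X̃: ℝ² → ℝ⁴ by X̃ = (1/S)·((r₁S − 2r₁Ω² − 2r₂ΩW)cos(r₂u₁) + 2f'Ω sin(r₂u₁), (r₁S − 2r₁Ω² − 2r₂ΩW)sin(r₂u₁) − 2f'Ω cos(r₂u₁), (r₂S − 2r₂Ω² + 2r₁ΩW)cos(r₁u₂) + 2g'Ω sin(r₁u₂), (r₂S − 2r₂Ω² + 2r₁ΩW)sin(r₁u₂) − 2g'Ω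 cos(r₁u₂)). Then ‖X̃(u₁,u₂)‖ = 1 for all (u₁,u₂) ∈ ℝ², i.e., X̃ takes values in S³. -/
open Real

noncomputable def vec4 (a b c d : ℝ) : EuclideanSpace ℝ (Fin 4) :=
  (WithLp.equiv 2 (Fin 4 → ℝ)).symm ![a, b, c, d]

/-!
Each pair of coordinates of `S • X̃` is a rotation of `(A, 2 f' Ω)` resp. `(B, 2 g' Ω)`, where
`A = r₁ (S - 2Ω²) - 2 r₂ Ω W` and `B = r₂ (S - 2Ω²) + 2 r₁ Ω W`, so
`S² ‖X̃‖² = A² + B² + 4 Ω² (f'² + g'²)`.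
As `r₁² + r₂² = 1`, `A² + B² = (S - 2Ω²)² + 4 Ω² W²`, and with `f'² + g'² = c (Ω² + W²)` and
`S = (1 + c)(Ω² + W²)` the total collapses to `S²`. Finally `S > 0` because
`Ω² + W² = r₂² f² + r₁² g²` and `f = cosh ≥ 1`.
-/

lemma norm_vec4 (a b c d : ℝ) : ‖vec4 a b c d‖ = √(a ^ 2 + b ^ 2 + c ^ 2 + d ^ 2) := by
  simp [vec4, EuclideanSpace.norm_eq, Fin.sum_univ_four, sq_abs]

lemma rotate_sq_add_rotate_sq (A B θ : ℝ) :
    (A * cos θ + B * sin θ) ^ 2 + (A * sin θ - B * cos θ) ^ 2 = A ^ 2 + B ^ 2 := by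
  linear_combination (A ^ 2 + B ^ 2) * sin_sq_add_cos_sq θ

lemma norm_vec4_rotate (A B C D θ φ : ℝ) :
    ‖vec4 (A * cos θ + B * sin θ) (A * sin θ - B * cos θ)
      (C * cos φ + D * sin φ) (C * sin φ - D * cos φ)‖ = √(A ^ 2 + B ^ 2 + (C ^ 2 + D ^ 2)) := by
  rw [norm_vec4, ← rotate_sq_add_rotate_sq A B θ, ← rotate_sq_add_rotate_sq C D φ, ← add_assoc]

lemma deriv_sq_of_eq_cosh_mul {f : ℝ → ℝ} {k : ℝ} (hf : ∀ x, f x = cosh (k * x)) (x : ℝ) :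
    deriv f x ^ 2 = k ^ 2 * (f x ^ 2 - 1) := by
  have hderiv : deriv f x = sinh (k * x) * k := by
    rw [funext hf]
    simpa using (((hasDerivAt_id x).const_mul k).cosh).deriv
  rw [hderiv, hf]
  linear_combination (-k ^ 2) * cosh_sq_sub_sinh_sq (k * x)

lemma deriv_sq_of_eq_const_mul_sinh_mul {g : ℝ → ℝ} {a k : ℝ}
    (hg : ∀ x, g x = a * sinh (k * x)) (x : ℝ) :
    deriv g x ^ 2 = (a * k) ^ 2 + k ^ 2 * g x ^ 2 := by
  have hderiv : deriv g x = a * (cosh (k * x) * k) := by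
    rw [funext hg]
    simpa using ((((hasDerivAt_id x).const_mul k).sinh).const_mul a).deriv
  rw [hderiv, hg]
  linear_combination (a * k) ^ 2 * cosh_sq_sub_sinh_sq (k * x)

lemma coeff_sq_sum_eq_sq {r1 r2 c Ω W S f' g' : ℝ} (h : r1 ^ 2 + r2 ^ 2 = 1)
    (hS : S = (1 + c) * (Ω ^ 2 + W ^ 2)) (hderiv : f' ^ 2 + g' ^ 2 = c * (Ω ^ 2 + W ^ 2)) :
    (r1 * S - 2 * r1 * Ω ^ 2 - 2 * r2 * Ω * W) ^ 2 + (2 * f' * Ω) ^ 2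
      + ((r2 * S - 2 * r2 * Ω ^ 2 + 2 * r1 * Ω * W) ^ 2 + (2 * g' * Ω) ^ 2) = S ^ 2 := by
  linear_combination ((S - 2 * Ω ^ 2) ^ 2 + 4 * Ω ^ 2 * W ^ 2) * h + 4 * Ω ^ 2 * hderiv
    - 4 * Ω ^ 2 * hS

theorem stmt_16 (r1 r2 c : ℝ) (hr1 : 0 < r1) (hr2 : 0 < r2) (hc : 0 < c)
    (h : r1 ^ 2 + r2 ^ 2 = 1)
    (f g : ℝ → ℝ) (Ω W S : ℝ → ℝ → ℝ)
    (hf : ∀ u1, f u1 = Real.cosh (r2 * Real.sqrt c * u1))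
    (hg : ∀ u2, g u2 = (r2 / r1) * Real.sinh (r1 * Real.sqrt c * u2))
    (hΩ : ∀ u1 u2, Ω u1 u2 = r1 * r2 * (f u1 + g u2))
    (hW : ∀ u1 u2, W u1 u2 = r2 ^ 2 * f u1 - r1 ^ 2 * g u2)
    (hS : ∀ u1 u2, S u1 u2 = (1 + c) * ((Ω u1 u2) ^ 2 + (W u1 u2) ^ 2))
    (Xt : ℝ → ℝ → EuclideanSpace ℝ (Fin 4))
    (hXt : ∀ u1 u2, Xt u1 u2 = (S u1 u2)⁻¹ •
      vec4
        ((r1 * S u1 u2 - 2 * r1 * (Ω u1 u2) ^ 2 - 2 * r2 * Ω u1 u2 * W u1 u2) * cos (r2 * u1)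
          + 2 * deriv f u1 * Ω u1 u2 * sin (r2 * u1))
        ((r1 * S u1 u2 - 2 * r1 * (Ω u1 u2) ^ 2 - 2 * r2 * Ω u1 u2 * W u1 u2) * sin (r2 * u1)
          - 2 * deriv f u1 * Ω u1 u2 * cos (r2 * u1))
        ((r2 * S u1 u2 - 2 * r2 * (Ω u1 u2) ^ 2 + 2 * r1 * Ω u1 u2 * W u1 u2) * cos (r1 * u2)
          + 2 * deriv g u2 * Ω u1 u2 * sin (r1 * u2))
        ((r2 * S u1 u2 - 2 * r2 * (Ω u1 u2) ^ 2 + 2 * r1 * Ω u1 u2 * W u1 u2) * sin (r1 * u2)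
          - 2 * deriv g u2 * Ω u1 u2 * cos (r1 * u2))) :
    ∀ u1 u2 : ℝ, ‖Xt u1 u2‖ = 1 := by
  intro u1 u2
  have hsq : √c ^ 2 = c := sq_sqrt hc.le
  have hΩW : Ω u1 u2 ^ 2 + W u1 u2 ^ 2 = r2 ^ 2 * f u1 ^ 2 + r1 ^ 2 * g u2 ^ 2 := by
    rw [hΩ, hW]
    linear_combination (r2 ^ 2 * f u1 ^ 2 + r1 ^ 2 * g u2 ^ 2) * h
  have hderiv : deriv f u1 ^ 2 + deriv g u2 ^ 2 = c * (Ω u1 u2 ^ 2 + W u1 u2 ^ 2) := by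
    have hk : r2 / r1 * (r1 * √c) = r2 * √c := by field_simp
    rw [deriv_sq_of_eq_cosh_mul hf, deriv_sq_of_eq_const_mul_sinh_mul hg, hk, hΩW]
    linear_combination (r2 ^ 2 * f u1 ^ 2 + r1 ^ 2 * g u2 ^ 2) * hsq
  have hS_pos : 0 < S u1 u2 := by
    have hf_one : 1 ≤ f u1 := hf u1 ▸ one_le_cosh _
    rw [hS, hΩW]
    have : 0 < r2 ^ 2 * f u1 ^ 2 := by positivity
    positivity
  rw [hXt, norm_smul, norm_vec4_rotate, coeff_sq_sum_eq_sq h (hS u1 u2) hderiv, sqrt_sq hS_pos.le,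
    norm_inv, norm_of_nonneg hS_pos.le, inv_mul_cancel₀ hS_pos.ne']
end
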